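/- Let P be a p×p permutation matrix, L a p×p real unit lower-triangular matrix, Q a p×p real orthogonal matrix, and Λ = diag(λ_1, …, λ_p) a real diagonal matrix, and set H̄ = Pᵀ L Q Λ Qᵀ Lᵀ P. Let τ > 0 and suppose λ_min(H̄) ≥ τ · σ_max(L)², where σ_max(L) is the largest singular value of L. Then λ_j ≥ τ for every j; consequently, the clipped diagonal matrix Λ̄ with entries max{τ, |λ_j|} equals Λ, and hence the preconditioned matrix H̄̄ = Pᵀ L Q Λ̄ Qᵀ Lᵀ P equals H̄. -/

import Mathlib

open Matrix

/-- The Euclidean norm on `ℝ^p` (vectors identified with `Fin p → ℝ`). -/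
noncomputable def euclNorm {p : ℕ} (x : Fin p → ℝ) : ℝ := Real.sqrt (∑ i, x i ^ 2)

/-- The smallest eigenvalue of a symmetric real matrix, characterized as the infimum
of the Rayleigh quotient `xᵀ A x / (xᵀ x)` over nonzero `x`. -/
noncomputable def lambdaMin {p : ℕ} (A : Matrix (Fin p) (Fin p) ℝ) : ℝ :=
  ⨅ x : {x : Fin p → ℝ // x ≠ 0}, x.1 ⬝ᵥ A.mulVec x.1 / euclNorm x.1 ^ 2

/-- The largest singular value of a real matrix `L`, characterized as the supremum of
`‖L x‖ / ‖x‖` over nonzero `x`. -/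
noncomputable def sigmaMax {p : ℕ} (L : Matrix (Fin p) (Fin p) ℝ) : ℝ :=
  ⨆ x : {x : Fin p → ℝ // x ≠ 0}, euclNorm (L.mulVec x.1) / euclNorm x.1

/-! Write `H̄ = Bᵀ Λ B` with `B = Qᵀ Lᵀ P`, invertible because `L` is unit triangular, and test the
Rayleigh quotient at `x = B⁻¹ e_j`, where it equals `λ_j / ‖x‖²`. As `Q` and `P` are orthogonal and
`‖Lᵀ y‖ ≤ σ_max(L) ‖y‖`, we get `1 = ‖B x‖ ≤ σ_max(L) ‖x‖`. Hence `τ σ_max(L)² ≤ λ_j / ‖x‖²` forces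
`λ_j ≥ τ σ_max(L)² ‖x‖² ≥ τ > 0`, and clipping changes nothing. -/

open scoped Matrix.Norms.L2Operator

variable {p : ℕ}

lemma euclNorm_eq_norm_toLp (x : Fin p → ℝ) : euclNorm x = ‖WithLp.toLp 2 x‖ := by
  simp [euclNorm, EuclideanSpace.norm_eq]

lemma euclNorm_nonneg (x : Fin p → ℝ) : 0 ≤ euclNorm x := Real.sqrt_nonneg _

lemma euclNorm_pos {x : Fin p → ℝ} (hx : x ≠ 0) : 0 < euclNorm x := by
  rw [euclNorm_eq_norm_toLp, norm_pos_iff]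
  exact fun h => hx (congrArg WithLp.ofLp h)

lemma euclNorm_sq (x : Fin p → ℝ) : euclNorm x ^ 2 = x ⬝ᵥ x := by
  rw [euclNorm, Real.sq_sqrt (Finset.sum_nonneg fun i _ => sq_nonneg (x i))]
  simp [dotProduct, sq]

lemma euclNorm_single_one (j : Fin p) : euclNorm (Pi.single j (1 : ℝ)) = 1 := by
  simp [euclNorm_eq_norm_toLp]

lemma abs_dotProduct_le_euclNorm_mul (x y : Fin p → ℝ) :
    |x ⬝ᵥ y| ≤ euclNorm x * euclNorm y := by
  have h : x ⬝ᵥ y = inner ℝ (WithLp.toLp 2 x) (WithLp.toLp 2 y) := by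
    simp [EuclideanSpace.inner_eq_star_dotProduct, dotProduct_comm]
  rw [h, euclNorm_eq_norm_toLp, euclNorm_eq_norm_toLp]
  exact abs_real_inner_le_norm _ _

lemma euclNorm_mulVec_le_l2_opNorm_mul (A : Matrix (Fin p) (Fin p) ℝ) (x : Fin p → ℝ) :
    euclNorm (A *ᵥ x) ≤ ‖A‖ * euclNorm x := by
  simpa [euclNorm_eq_norm_toLp] using A.l2_opNorm_mulVec (WithLp.toLp 2 x)

lemma euclNorm_mulVec_of_transpose_mul_self {A : Matrix (Fin p) (Fin p) ℝ} (hA : Aᵀ * A = 1)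
    (x : Fin p → ℝ) : euclNorm (A *ᵥ x) = euclNorm x := by
  have h : (A *ᵥ x) ⬝ᵥ (A *ᵥ x) = x ⬝ᵥ x := by
    rw [dotProduct_mulVec, ← vecMul_transpose, vecMul_vecMul, hA, vecMul_one]
  rw [← sq_eq_sq₀ (euclNorm_nonneg _) (euclNorm_nonneg _), euclNorm_sq, euclNorm_sq, h]

lemma dotProduct_transpose_mul_mul_mulVec (B A : Matrix (Fin p) (Fin p) ℝ) (x : Fin p → ℝ) :
    x ⬝ᵥ (Bᵀ * A * B) *ᵥ x = (B *ᵥ x) ⬝ᵥ A *ᵥ (B *ᵥ x) := by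
  rw [← mulVec_mulVec, ← mulVec_mulVec, dotProduct_mulVec, vecMul_transpose]

lemma sigmaMax_nonneg (L : Matrix (Fin p) (Fin p) ℝ) : 0 ≤ sigmaMax L :=
  Real.iSup_nonneg fun _ => div_nonneg (euclNorm_nonneg _) (euclNorm_nonneg _)

lemma euclNorm_mulVec_le_sigmaMax_mul (L : Matrix (Fin p) (Fin p) ℝ) (x : Fin p → ℝ) :
    euclNorm (L *ᵥ x) ≤ sigmaMax L * euclNorm x := by
  rcases eq_or_ne x 0 with rfl | hx
  · simp [euclNorm]
  have hbdd : BddAbove (Set.range fun y : {y : Fin p → ℝ // y ≠ 0} =>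
      euclNorm (L *ᵥ y.1) / euclNorm y.1) := by
    refine ⟨‖L‖, Set.forall_mem_range.2 fun y => ?_⟩
    rw [div_le_iff₀ (euclNorm_pos y.2)]
    exact euclNorm_mulVec_le_l2_opNorm_mul L y.1
  rw [← div_le_iff₀ (euclNorm_pos hx)]
  exact le_ciSup hbdd (⟨x, hx⟩ : {y : Fin p → ℝ // y ≠ 0})

/-- `‖Lᵀ x‖² = ⟨x, L Lᵀ x⟩ ≤ ‖x‖ σ_max(L) ‖Lᵀ x‖`. -/
lemma euclNorm_transpose_mulVec_le_sigmaMax_mul (L : Matrix (Fin p) (Fin p) ℝ)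
    (x : Fin p → ℝ) : euclNorm (Lᵀ *ᵥ x) ≤ sigmaMax L * euclNorm x := by
  set y := Lᵀ *ᵥ x
  rcases (euclNorm_nonneg y).eq_or_lt with hy | hy
  · rw [← hy]
    exact mul_nonneg (sigmaMax_nonneg L) (euclNorm_nonneg x)
  refine le_of_mul_le_mul_right ?_ hy
  calc euclNorm y * euclNorm y = x ⬝ᵥ L *ᵥ y := by
        rw [← sq, euclNorm_sq, dotProduct_mulVec, ← mulVec_transpose, transpose_transpose,
          dotProduct_comm]
    _ ≤ euclNorm x * euclNorm (L *ᵥ y) :=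
        (le_abs_self _).trans (abs_dotProduct_le_euclNorm_mul _ _)
    _ ≤ euclNorm x * (sigmaMax L * euclNorm y) := by
        gcongr
        · exact euclNorm_nonneg x
        · exact euclNorm_mulVec_le_sigmaMax_mul L y
    _ = sigmaMax L * euclNorm x * euclNorm y := by ring

lemma lambdaMin_le_rayleigh (A : Matrix (Fin p) (Fin p) ℝ) {x : Fin p → ℝ} (hx : x ≠ 0) :
    lambdaMin A ≤ x ⬝ᵥ A *ᵥ x / euclNorm x ^ 2 := by
  have hbdd : BddBelow (Set.range fun y : {y : Fin p → ℝ // y ≠ 0} =>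
      y.1 ⬝ᵥ A *ᵥ y.1 / euclNorm y.1 ^ 2) := by
    refine ⟨-‖A‖, Set.forall_mem_range.2 fun y => ?_⟩
    rw [le_div_iff₀ (pow_pos (euclNorm_pos y.2) 2)]
    have hbound := (abs_dotProduct_le_euclNorm_mul y.1 (A *ᵥ y.1)).trans
      (mul_le_mul_of_nonneg_left (euclNorm_mulVec_le_l2_opNorm_mul A y.1) (euclNorm_nonneg _))
    nlinarith [neg_abs_le (y.1 ⬝ᵥ A *ᵥ y.1)]
  exact ciInf_le hbdd (⟨x, hx⟩ : {y : Fin p → ℝ // y ≠ 0})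

theorem le_apply_of_mul_sq_le_lambdaMin {B : Matrix (Fin p) (Fin p) ℝ} {d : Fin p → ℝ}
    {τ c : ℝ} (hB : IsUnit B.det) (hc : ∀ x, euclNorm (B *ᵥ x) ≤ c * euclNorm x)
    (hτ : 0 ≤ τ) (h : τ * c ^ 2 ≤ lambdaMin (Bᵀ * diagonal d * B)) (j : Fin p) : τ ≤ d j := by
  set x := B⁻¹ *ᵥ Pi.single j 1
  have hBx : B *ᵥ x = Pi.single j 1 := by
    rw [mulVec_mulVec, mul_nonsing_inv B hB, one_mulVec]
  have hx : x ≠ 0 := by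
    intro h0
    simpa [h0] using congrFun hBx j
  have hrayleigh : x ⬝ᵥ (Bᵀ * diagonal d * B) *ᵥ x = d j := by
    rw [dotProduct_transpose_mul_mul_mulVec, hBx, mulVec_single_one]
    simp
  have hcx : 1 ≤ c * euclNorm x := by
    simpa [hBx, euclNorm_single_one] using hc x
  have hxpos := pow_pos (euclNorm_pos hx) 2
  have hquot := h.trans (lambdaMin_le_rayleigh _ hx)
  rw [hrayleigh, le_div_iff₀ hxpos] at hquot
  calc τ ≤ τ * (c * euclNorm x) ^ 2 := le_mul_of_one_le_right hτ (one_le_pow₀ hcx)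
    _ = τ * c ^ 2 * euclNorm x ^ 2 := by ring
    _ ≤ d j := hquot

lemma euclNorm_mulVec_conj_le_sigmaMax_mul {P L Q : Matrix (Fin p) (Fin p) ℝ}
    (hQ : Q * Qᵀ = 1) (hP : Pᵀ * P = 1) (x : Fin p → ℝ) :
    euclNorm ((Qᵀ * Lᵀ * P) *ᵥ x) ≤ sigmaMax L * euclNorm x := by
  rw [← mulVec_mulVec, ← mulVec_mulVec,
    euclNorm_mulVec_of_transpose_mul_self (by rwa [transpose_transpose]),
    ← euclNorm_mulVec_of_transpose_mul_self hP x]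
  exact euclNorm_transpose_mulVec_le_sigmaMax_mul L _

theorem stmt10_general {p : ℕ} (P L Q : Matrix (Fin p) (Fin p) ℝ) (d : Fin p → ℝ)
    (τ : ℝ) (hτ : 0 < τ)
    (hP : ∃ e : Equiv.Perm (Fin p), P = e.permMatrix ℝ)
    (hLdiag : ∀ i, L i i = 1) (hLtri : ∀ i j : Fin p, i < j → L i j = 0)
    (hQ : Q * Qᵀ = 1)
    (hmin : τ * sigmaMax L ^ 2 ≤ lambdaMin (Pᵀ * L * Q * Matrix.diagonal d * Qᵀ * Lᵀ * P)) :
    (∀ j, τ ≤ d j) ∧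
    (Matrix.diagonal fun j => max τ |d j|) = Matrix.diagonal d ∧
    Pᵀ * L * Q * (Matrix.diagonal fun j => max τ |d j|) * Qᵀ * Lᵀ * P =
      Pᵀ * L * Q * Matrix.diagonal d * Qᵀ * Lᵀ * P := by
  obtain ⟨e, rfl⟩ := hP
  have hPP : (e.permMatrix ℝ)ᵀ * e.permMatrix ℝ = 1 := by
    rw [transpose_permMatrix, ← permMatrix_mul, mul_inv_cancel, permMatrix_one]
  have hL : L.det = 1 := by
    rw [det_of_isLowerTriangular L fun i j h => hLtri i j h]
    simp [hLdiag]
  set B := Qᵀ * Lᵀ * e.permMatrix ℝ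
  have hB : IsUnit B.det := by
    simp only [B, det_mul, det_transpose, hL, mul_one]
    exact (isUnit_det_of_right_inverse hQ).mul (isUnit_det_of_left_inverse hPP)
  have hH : (e.permMatrix ℝ)ᵀ * L * Q * diagonal d * Qᵀ * Lᵀ * e.permMatrix ℝ
      = Bᵀ * diagonal d * B := by
    simp only [B, transpose_mul, transpose_transpose, Matrix.mul_assoc]
  have hd : ∀ j, τ ≤ d j := le_apply_of_mul_sq_le_lambdaMin hB
    (euclNorm_mulVec_conj_le_sigmaMax_mul hQ hPP) hτ.le (hH ▸ hmin)
  have hclip : (fun j => max τ |d j|) = d :=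
    funext fun j => by rw [abs_of_pos (hτ.trans_le (hd j)), max_eq_right (hd j)]
  exact ⟨hd, by rw [hclip], by rw [hclip]⟩

/-- Deterministic core of Theorem 3 of the paper: if `H̄ = Pᵀ L Q Λ Qᵀ Lᵀ P` with `P` a
permutation matrix, `L` unit lower-triangular, `Q` orthogonal, `Λ = diag(λ_j)`, and
`λ_min(H̄) ≥ τ σ_max(L)²` with `τ > 0`, then `λ_j ≥ τ` for every `j`; consequently the
clipped matrix `Λ̄ = diag(max{τ, |λ_j|})` equals `Λ` and the preconditioned matrix
`H̄̄ = Pᵀ L Q Λ̄ Qᵀ Lᵀ P` equals `H̄`. -/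
theorem stmt10 {p : ℕ} (P L Q : Matrix (Fin p) (Fin p) ℝ) (d : Fin p → ℝ)
    (τ : ℝ) (hτ : 0 < τ)
    (hP : ∃ e : Equiv.Perm (Fin p), P = e.permMatrix ℝ)
    (hLdiag : ∀ i, L i i = 1) (hLtri : ∀ i j : Fin p, i < j → L i j = 0)
    (hQ : Q * Qᵀ = 1) (hQ' : Qᵀ * Q = 1)
    (hmin : τ * sigmaMax L ^ 2 ≤ lambdaMin (Pᵀ * L * Q * Matrix.diagonal d * Qᵀ * Lᵀ * P)) :
    (∀ j, τ ≤ d j) ∧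
    (Matrix.diagonal fun j => max τ |d j|) = Matrix.diagonal d ∧
    Pᵀ * L * Q * (Matrix.diagonal fun j => max τ |d j|) * Qᵀ * Lᵀ * P =
      Pᵀ * L * Q * Matrix.diagonal d * Qᵀ * Lᵀ * P :=
  stmt10_general P L Q d τ hτ hP hLdiag hLtri hQ hmin
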